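/- Let f : ℕ → ℕ be a non-decreasing unbounded total recursive function such that ∑_{n=0}^∞ 2^{n−f(n)} = ∞, and let h enumerate in increasing order the set {n : f(n) < f(n+1)}. Then ∑_{j=1}^∞ 2^{h(j)−f(h(j))} = ∞. -/

import Mathlib

/-!
Between two consecutive jump points `h J < h (J + 1)` the function `f` is constant, so the terms
`2 ^ (n - f n)` on the block `(h J, h (J + 1)]` form a geometric series, bounded by twice its last
term `2 ^ (h (J + 1) - f (h (J + 1)))`. Hence every partial sum of the full series is bounded by a
constant plus twice a partial sum of the subsequence.
-/

open Filter Finset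

lemma exists_mem_Ico_lt_succ_of_lt {β : Type*} [LinearOrder β] {f : ℕ → β} {a b : ℕ}
    (hab : a ≤ b) (hlt : f a < f b) : ∃ n ∈ Ico a b, f n < f (n + 1) := by
  induction b, hab using Nat.le_induction with
  | base => exact absurd hlt (lt_irrefl _)
  | succ b hab ih =>
    by_cases hb : f a < f b
    · obtain ⟨n, hn, hstep⟩ := ih hb
      exact ⟨n, Ico_subset_Ico_right b.le_succ hn, hstep⟩
    · exact ⟨b, mem_Ico.2 ⟨hab, b.lt_succ_self⟩, (not_lt.1 hb).trans_lt hlt⟩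

lemma Monotone.eq_of_mem_Ioc_of_steps_subset_range {β : Type*} [LinearOrder β] {f : ℕ → β}
    (hf : Monotone f) {h : ℕ → ℕ} (hh : StrictMono h)
    (hsteps : {n : ℕ | f n < f (n + 1)} ⊆ Set.range h) {J n : ℕ}
    (hn : n ∈ Ioc (h J) (h (J + 1))) : f n = f (h (J + 1)) := by
  rw [mem_Ioc] at hn
  refine le_antisymm (hf hn.2) (not_lt.1 fun hlt => ?_)
  obtain ⟨m, hm, hstep⟩ := exists_mem_Ico_lt_succ_of_lt hn.2 hlt
  obtain ⟨k, rfl⟩ := hsteps hstep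
  rw [mem_Ico] at hm
  have hJk : J < k := hh.lt_iff_lt.1 (by omega)
  have hkJ : k < J + 1 := hh.lt_iff_lt.1 hm.2
  omega

lemma sum_Ioc_two_zpow_sub_le (a b : ℕ) (c : ℤ) :
    ∑ n ∈ Ioc a b, (2 : ℝ) ^ ((n : ℤ) - c) ≤ 2 * 2 ^ ((b : ℤ) - c) := by
  have hsplit : ∀ n : ℕ, (2 : ℝ) ^ ((n : ℤ) - c) = 2 ^ n * 2 ^ (-c) := fun n => by
    rw [sub_eq_add_neg, zpow_add₀ two_ne_zero, zpow_natCast]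
  have hgeom : ∑ n ∈ range (b + 1), (2 : ℝ) ^ n ≤ 2 ^ (b + 1) := by
    rw [geom_sum_eq (by norm_num) (b + 1)]
    norm_num
  calc ∑ n ∈ Ioc a b, (2 : ℝ) ^ ((n : ℤ) - c)
      ≤ ∑ n ∈ range (b + 1), (2 : ℝ) ^ ((n : ℤ) - c) :=
        sum_le_sum_of_subset_of_nonneg
          (fun n hn => mem_range.2 (Nat.lt_succ_of_le (mem_Ioc.1 hn).2))
          (fun n _ _ => by positivity)
    _ = (∑ n ∈ range (b + 1), (2 : ℝ) ^ n) * 2 ^ (-c) := by simp only [hsplit, sum_mul]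
    _ ≤ 2 ^ (b + 1) * 2 ^ (-c) := by gcongr
    _ = 2 * 2 ^ ((b : ℤ) - c) := by rw [hsplit, pow_succ]; ring

lemma summable_of_sum_Ico_le {T g : ℕ → ℝ} (hT : ∀ n, 0 ≤ T n) (hg : Summable g)
    {h : ℕ → ℕ} (hh : StrictMono h) (hblock : ∀ J, ∑ n ∈ Ico (h J) (h (J + 1)), T n ≤ g J) :
    Summable T := by
  have hg_nonneg : ∀ J, 0 ≤ g J := fun J => (sum_nonneg fun n _ => hT n).trans (hblock J)
  have hpartial :
      ∀ N, ∑ n ∈ range (h N), T n ≤ ∑ n ∈ range (h 0), T n + ∑ J ∈ range N, g J := by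
    intro N
    induction N with
    | zero => simp
    | succ N ih =>
      rw [← sum_range_add_sum_Ico T (hh.monotone N.le_succ), sum_range_succ]
      linarith [hblock N]
  refine summable_of_sum_range_le (c := ∑ n ∈ range (h 0), T n + ∑' J, g J) hT
    fun N => ?_
  calc ∑ n ∈ range N, T n
      ≤ ∑ n ∈ range (h N), T n :=
        sum_le_sum_of_subset_of_nonneg (range_subset_range.2 hh.le_apply) fun n _ _ => hT n
    _ ≤ ∑ n ∈ range (h 0), T n + ∑ J ∈ range N, g J := hpartial N
    _ ≤ ∑ n ∈ range (h 0), T n + ∑' J, g J := by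
        gcongr
        exact hg.sum_le_tsum _ fun J _ => hg_nonneg J

theorem sum_divergence (f : ℕ → ℕ) (hmono : Monotone f)
    (h : ℕ → ℕ) (hh : StrictMono h)
    (hrange : Set.range h = {n : ℕ | f n < f (n + 1)})
    (hdiv : ¬ Summable (fun n : ℕ => (2 : ℝ) ^ ((n : ℤ) - (f n : ℤ)))) :
    ¬ Summable (fun j : ℕ => (2 : ℝ) ^ ((h (j + 1) : ℤ) - (f (h (j + 1)) : ℤ))) := by
  intro hs
  refine hdiv (summable_of_sum_Ico_le (fun n => by positivity) (hs.mul_left 2)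
    (h := fun J => h J + 1) (hh.add_const 1) fun J => ?_)
  have hconst : ∀ n ∈ Ioc (h J) (h (J + 1)), f n = f (h (J + 1)) := fun n hn =>
    hmono.eq_of_mem_Ioc_of_steps_subset_range hh hrange.symm.subset hn
  calc ∑ n ∈ Ico (h J + 1) (h (J + 1) + 1), (2 : ℝ) ^ ((n : ℤ) - (f n : ℤ))
      = ∑ n ∈ Ioc (h J) (h (J + 1)), (2 : ℝ) ^ ((n : ℤ) - (f (h (J + 1)) : ℤ)) := by
        rw [Ico_add_one_add_one_eq_Ioc]
        exact sum_congr rfl fun n hn => by rw [hconst n hn]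
    _ ≤ 2 * 2 ^ ((h (J + 1) : ℤ) - (f (h (J + 1)) : ℤ)) := sum_Ioc_two_zpow_sub_le _ _ _
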